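/- Let G ⊆ ℝ^J be a convex polyhedron and suppose a projection map π : ℝ^J → G exists with π(x) = x for x ∈ G and π(x) − x ∈ d(π(x)) for x ∉ G, where d(y) = cone{d_i : i ∈ I(y)}, and π is continuous. Fix x̄ ∈ ∂G with I = I(x̄) and let G₀ = ⋂_{i∈I}{y : ⟨y, n_i⟩ ≥ 0}. Then there is a map π_I : ℝ^J → G₀ with π_I(y) = y for y ∈ G₀ and π_I(y) − y ∈ d_I(π_I(y)) for y ∉ G₀, where d_I(z) = cone{d_i : i ∈ I, ⟨z, n_i⟩ = 0}; namely, π_I(y) := δ^{-1}(π(x̄ + δy) − x̄) for δ > 0 small enough that x̄ + δy lies in a neighborhood where the active faces of π are contained in I. -/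

import Mathlib

open scoped BigOperators

noncomputable section

/-- The convex cone generated by a set of vectors. -/
def coneHull {J : ℕ} (S : Set (EuclideanSpace ℝ (Fin J))) : Set (EuclideanSpace ℝ (Fin J)) :=
  {v | ∃ (k : ℕ) (lam : Fin k → ℝ) (w : Fin k → EuclideanSpace ℝ (Fin J)),
    (∀ j, 0 ≤ lam j) ∧ (∀ j, w j ∈ S) ∧ v = ∑ j, lam j • w j}

/-! The tangent cone `G₀` of `G = ⋂ i, {x | c i ≤ ⟪x, n i⟫}` at `xb` is the blow-up of `G` near
`xb`: for `δ > 0` so small that no constraint inactive at `xb` becomes active along the segment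
from `xb` to `xb + δ • y` or at its projection, `y ↦ xb + δ • y` turns the constraints of `G₀` into
those of `G`, and the faces of `G` active at `π (xb + δ • y)` into the faces of `G₀` active at
`δ⁻¹ • (π (xb + δ • y) - xb)`. Rescaling the projection of `G` therefore yields one of `G₀`. -/

open Filter Topology
open scoped RealInnerProductSpace

section Halfspaces

variable {E ι : Type*} [NormedAddCommGroup E] [InnerProductSpace ℝ E] (n : ι → E) (c : ι → ℝ)

theorem isClosed_iInter_halfspaces : IsClosed (⋂ i, {x : E | c i ≤ ⟪x, n i⟫}) :=
  isClosed_iInter fun _ => isClosed_le continuous_const (continuous_id.inner continuous_const)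

theorem Filter.Tendsto.eventually_forall_notMem_lt_inner [Finite ι] {α : Type*} {l : Filter α}
    {f : α → E} {x : E} (hf : Tendsto f l (𝓝 x)) {s : Set ι} (hs : ∀ i ∉ s, c i < ⟪x, n i⟫) :
    ∀ᶠ a in l, ∀ i ∉ s, c i < ⟪f a, n i⟫ := by
  refine eventually_all.2 fun i => ?_
  by_cases hi : i ∈ s
  · exact .of_forall fun _ h => absurd hi h
  · exact ((hf.inner tendsto_const_nhds).eventually_const_lt (hs i hi)).mono fun _ h _ => h

theorem exists_pos_forall_notMem_lt_inner [Finite ι] {π : E → E} (hπ : Continuous π) {xb : E}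
    (hxb : π xb = xb) {s : Set ι} (hs : ∀ i ∉ s, c i < ⟪xb, n i⟫) (y : E) :
    ∃ δ : ℝ, 0 < δ ∧ (∀ i ∉ s, c i < ⟪xb + δ • y, n i⟫) ∧
      ∀ i ∉ s, c i < ⟪π (xb + δ • y), n i⟫ := by
  have hline : Tendsto (fun δ : ℝ => xb + δ • y) (𝓝[>] 0) (𝓝 xb) := by
    have hcont : Continuous fun δ : ℝ => xb + δ • y := by fun_prop
    simpa using (hcont.tendsto 0).mono_left nhdsWithin_le_nhds
  have hproj : Tendsto (fun δ : ℝ => π (xb + δ • y)) (𝓝[>] 0) (𝓝 xb) := by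
    have h := (hπ.tendsto xb).comp hline
    rwa [hxb] at h
  exact (eventually_mem_nhdsWithin.and ((hline.eventually_forall_notMem_lt_inner n c hs).and
    (hproj.eventually_forall_notMem_lt_inner n c hs))).exists

variable {n c}

theorem inner_add_smul_of_active {xb : E} {i : ι} (hi : ⟪xb, n i⟫ = c i) (δ : ℝ) (y : E) :
    ⟪xb + δ • y, n i⟫ = c i + δ * ⟪y, n i⟫ := by
  rw [inner_add_left, real_inner_smul_left, hi]

theorem inner_inv_smul_sub_of_active {xb : E} {i : ι} (hi : ⟪xb, n i⟫ = c i) (δ : ℝ) (p : E) :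
    ⟪δ⁻¹ • (p - xb), n i⟫ = δ⁻¹ * (⟪p, n i⟫ - c i) := by
  rw [real_inner_smul_left, inner_sub_left, hi]

theorem add_smul_mem_iInter_halfspaces_iff {xb y : E} {δ : ℝ} (hδ : 0 < δ) {s : Set ι}
    (hact : ∀ i ∈ s, ⟪xb, n i⟫ = c i) (hinact : ∀ i ∉ s, c i ≤ ⟪xb + δ • y, n i⟫) :
    xb + δ • y ∈ ⋂ i, {x | c i ≤ ⟪x, n i⟫} ↔ ∀ i ∈ s, 0 ≤ ⟪y, n i⟫ := by
  simp only [Set.mem_iInter, Set.mem_ofPred_eq]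
  constructor
  · intro h i hi
    have hci := h i
    rw [inner_add_smul_of_active (hact i hi)] at hci
    exact (mul_nonneg_iff_of_pos_left hδ).1 (by linarith)
  · intro h i
    by_cases hi : i ∈ s
    · rw [inner_add_smul_of_active (hact i hi)]
      exact le_add_of_nonneg_right (mul_nonneg hδ.le (h i hi))
    · exact hinact i hi

end Halfspaces

theorem inv_smul_sub_sub_eq {E : Type*} [AddCommGroup E] [Module ℝ E] {δ : ℝ} (hδ : δ ≠ 0)
    (p x y : E) : δ⁻¹ • (p - x) - y = δ⁻¹ • (p - (x + δ • y)) := by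
  rw [smul_sub, smul_sub, smul_add, inv_smul_smul₀ hδ, sub_add_eq_sub_sub]

section ConeHull

variable {J : ℕ} {S T : Set (EuclideanSpace ℝ (Fin J))}

theorem coneHull_mono (h : S ⊆ T) : coneHull S ⊆ coneHull T :=
  fun _ ⟨k, lam, w, hlam, hw, hv⟩ => ⟨k, lam, w, hlam, fun j => h (hw j), hv⟩

theorem smul_mem_coneHull {a : ℝ} (ha : 0 ≤ a) {v : EuclideanSpace ℝ (Fin J)}
    (hv : v ∈ coneHull S) : a • v ∈ coneHull S := by
  obtain ⟨k, lam, w, hlam, hw, rfl⟩ := hv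
  refine ⟨k, fun j => a * lam j, w, fun j => mul_nonneg ha (hlam j), hw, ?_⟩
  simp only [Finset.smul_sum, smul_smul]

end ConeHull

theorem stmt18_general (J N : ℕ) (n dvec : Fin N → EuclideanSpace ℝ (Fin J)) (c : Fin N → ℝ)
    (G : Set (EuclideanSpace ℝ (Fin J)))
    (hG : G = ⋂ i, {x | c i ≤ (inner ℝ x (n i) : ℝ)})
    (π : EuclideanSpace ℝ (Fin J) → EuclideanSpace ℝ (Fin J))
    (hπcont : Continuous π) (hπran : ∀ x, π x ∈ G) (hπid : ∀ x ∈ G, π x = x)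
    (hπdir : ∀ x ∉ G, π x - x ∈
      coneHull {v | ∃ i, (inner ℝ (π x) (n i) : ℝ) = c i ∧ v = dvec i})
    (xb : EuclideanSpace ℝ (Fin J)) (hxb : xb ∈ frontier G)
    (I : Set (Fin N)) (hI : I = {i | (inner ℝ xb (n i) : ℝ) = c i})
    (G0 : Set (EuclideanSpace ℝ (Fin J)))
    (hG0 : G0 = {y | ∀ i ∈ I, 0 ≤ (inner ℝ y (n i) : ℝ)}) :
    ∃ πI : EuclideanSpace ℝ (Fin J) → EuclideanSpace ℝ (Fin J),
      (∀ y, πI y ∈ G0) ∧ (∀ y ∈ G0, πI y = y) ∧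
      (∀ y ∉ G0, πI y - y ∈
        coneHull {v | ∃ i ∈ I, (inner ℝ (πI y) (n i) : ℝ) = 0 ∧ v = dvec i}) ∧
      (∀ y ∉ G0, ∃ δ : ℝ, 0 < δ ∧ πI y = δ⁻¹ • (π (xb + δ • y) - xb)) := by
  subst hG hI hG0
  have hxbG := (isClosed_iInter_halfspaces n c).frontier_subset hxb
  have hinact : ∀ i ∉ {i | ⟪xb, n i⟫ = c i}, c i < ⟪xb, n i⟫ := fun i hi =>
    lt_of_le_of_ne (Set.mem_iInter.1 hxbG i) (Ne.symm hi)
  choose δ hδ hline hproj using exists_pos_forall_notMem_lt_inner n c hπcont (hπid xb hxbG) hinact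
  have hmem_iff (y) := add_smul_mem_iInter_halfspaces_iff (hδ y) (fun _ hi => hi)
    fun i hi => (hline y i hi).le
  refine ⟨fun y => (δ y)⁻¹ • (π (xb + δ y • y) - xb), fun y i hi => ?_, fun y hy => ?_,
    fun y hy => ?_, fun y _ => ⟨δ y, hδ y, rfl⟩⟩
  · rw [inner_inv_smul_sub_of_active hi]
    exact mul_nonneg (inv_nonneg.2 (hδ y).le) (sub_nonneg.2 (Set.mem_iInter.1 (hπran _) i))
  · simp only [hπid _ ((hmem_iff y).2 hy), add_sub_cancel_left, inv_smul_smul₀ (hδ y).ne']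
  · rw [inv_smul_sub_sub_eq (hδ y).ne']
    refine smul_mem_coneHull (inv_nonneg.2 (hδ y).le)
      (coneHull_mono ?_ (hπdir _ (mt (hmem_iff y).1 hy)))
    rintro _ ⟨i, hi, rfl⟩
    have hiI : ⟪xb, n i⟫ = c i := by_contra fun h => (hproj y i h).ne' hi
    exact ⟨i, hiI, by rw [inner_inv_smul_sub_of_active hiI, hi, sub_self, mul_zero], rfl⟩

theorem stmt18 (J N : ℕ) (n dvec : Fin N → EuclideanSpace ℝ (Fin J)) (c : Fin N → ℝ)
    (hn : ∀ i, ‖n i‖ = 1) (hd : ∀ i, (inner ℝ (dvec i) (n i) : ℝ) = 1)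
    (G : Set (EuclideanSpace ℝ (Fin J)))
    (hG : G = ⋂ i, {x | c i ≤ (inner ℝ x (n i) : ℝ)})
    (π : EuclideanSpace ℝ (Fin J) → EuclideanSpace ℝ (Fin J))
    (hπcont : Continuous π) (hπran : ∀ x, π x ∈ G) (hπid : ∀ x ∈ G, π x = x)
    (hπdir : ∀ x ∉ G, π x - x ∈
      coneHull {v | ∃ i, (inner ℝ (π x) (n i) : ℝ) = c i ∧ v = dvec i})
    (xb : EuclideanSpace ℝ (Fin J)) (hxb : xb ∈ frontier G)
    (I : Set (Fin N)) (hI : I = {i | (inner ℝ xb (n i) : ℝ) = c i})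
    (G0 : Set (EuclideanSpace ℝ (Fin J)))
    (hG0 : G0 = {y | ∀ i ∈ I, 0 ≤ (inner ℝ y (n i) : ℝ)}) :
    ∃ πI : EuclideanSpace ℝ (Fin J) → EuclideanSpace ℝ (Fin J),
      (∀ y, πI y ∈ G0) ∧ (∀ y ∈ G0, πI y = y) ∧
      (∀ y ∉ G0, πI y - y ∈
        coneHull {v | ∃ i ∈ I, (inner ℝ (πI y) (n i) : ℝ) = 0 ∧ v = dvec i}) ∧
      (∀ y ∉ G0, ∃ δ : ℝ, 0 < δ ∧ πI y = δ⁻¹ • (π (xb + δ • y) - xb)) :=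
  stmt18_general J N n dvec c G hG π hπcont hπran hπid hπdir xb hxb I hI G0 hG0

end
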